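/- arXiv:1009.0685 — 3 statements merged into one kernel-verified Lean document; each statement's English description precedes it below -/
import Mathlib

section
/- Sup-convolution of a quadratic form: let X be a symmetric N×N real matrix and ε ∈ (0,1) be such that all eigenvalues of X are strictly less than 1/ε. Then for every ξ ∈ ℝ^N, sup over ζ ∈ ℝ^N of {Xζ·ζ - |ξ-ζ|²/ε} equals X^ε ξ·ξ, where X^ε = (I - εX)^{-1} X. -/
/-!
With `A = 1 - ε • X` and `ζ₀ = A⁻¹ ξ`, completing the square gives
`ε (Xζ·ζ) - |ξ - ζ|² = ε (A⁻¹X ξ·ξ) - A(ζ - ζ₀)·(ζ - ζ₀)`,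
the constant term coming from `A⁻¹ - 1 = ε A⁻¹X`. As `A` is positive definite, the supremum
is attained exactly at `ζ₀`.
-/

open Matrix

namespace Matrix

section CommRing

variable {n R : Type*} [Fintype n] [CommRing R]

theorem IsSymm.mulVec_dotProduct_comm {A : Matrix n n R} (hA : A.IsSymm) (u w : n → R) :
    A *ᵥ u ⬝ᵥ w = u ⬝ᵥ A *ᵥ w := by
  rw [dotProduct_mulVec, ← mulVec_transpose, hA.eq]

variable [DecidableEq n]

theorem IsSymm.mulVec_dotProduct_self_sub_two_mul_dotProduct {A : Matrix n n R}
    (hA : A.IsSymm) (hdet : IsUnit A.det) (ζ b : n → R) :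
    A *ᵥ ζ ⬝ᵥ ζ - 2 * (b ⬝ᵥ ζ) =
      A *ᵥ (ζ - A⁻¹ *ᵥ b) ⬝ᵥ (ζ - A⁻¹ *ᵥ b) - A⁻¹ *ᵥ b ⬝ᵥ b := by
  have hb : A *ᵥ (A⁻¹ *ᵥ b) = b := by rw [mulVec_mulVec, mul_nonsing_inv A hdet, one_mulVec]
  rw [mulVec_sub, hb, sub_dotProduct, dotProduct_sub, dotProduct_sub,
    hA.mulVec_dotProduct_comm ζ (A⁻¹ *ᵥ b), hb, dotProduct_comm ζ b,
    dotProduct_comm (A⁻¹ *ᵥ b) b]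
  ring

theorem mul_mulVec_dotProduct_sub_dotProduct_sub {X : Matrix n n R} {ε : R}
    (hA : (1 - ε • X).IsSymm) (hdet : IsUnit (1 - ε • X).det) (ξ ζ : n → R) :
    ε * (X *ᵥ ζ ⬝ᵥ ζ) - (ξ - ζ) ⬝ᵥ (ξ - ζ) =
      ε * ((1 - ε • X)⁻¹ * X) *ᵥ ξ ⬝ᵥ ξ -
        (1 - ε • X) *ᵥ (ζ - (1 - ε • X)⁻¹ *ᵥ ξ) ⬝ᵥ (ζ - (1 - ε • X)⁻¹ *ᵥ ξ) := by
  set A := 1 - ε • X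
  have hinv : A⁻¹ = 1 + ε • (A⁻¹ * X) := by
    calc A⁻¹ = A⁻¹ * (A + ε • X) := by rw [show A + ε • X = 1 by simp [A], mul_one]
      _ = 1 + ε • (A⁻¹ * X) := by rw [mul_add, nonsing_inv_mul A hdet, Matrix.mul_smul]
  have hinvξ : A⁻¹ *ᵥ ξ ⬝ᵥ ξ = ξ ⬝ᵥ ξ + ε * (A⁻¹ * X) *ᵥ ξ ⬝ᵥ ξ := by
    conv_lhs => rw [hinv]
    rw [add_mulVec, one_mulVec, smul_mulVec, add_dotProduct, smul_dotProduct, smul_eq_mul]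
  have hX : ε * (X *ᵥ ζ ⬝ᵥ ζ) = ζ ⬝ᵥ ζ - A *ᵥ ζ ⬝ᵥ ζ := by
    simp only [A, sub_mulVec, one_mulVec, smul_mulVec, sub_dotProduct, smul_dotProduct, smul_eq_mul]
    ring
  rw [hX, sub_dotProduct, dotProduct_sub, dotProduct_sub, dotProduct_comm ζ ξ]
  linear_combination -hA.mulVec_dotProduct_self_sub_two_mul_dotProduct hdet ζ ξ + hinvξ

end CommRing

theorem isGreatest_range_mulVec_dotProduct_sub_div {n : Type*} [Fintype n] [DecidableEq n]
    {X : Matrix n n ℝ} {ε : ℝ} (hε : 0 < ε) (hpos : (1 - ε • X).PosDef) (ξ : n → ℝ) :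
    IsGreatest (Set.range fun ζ => X *ᵥ ζ ⬝ᵥ ζ - (ξ - ζ) ⬝ᵥ (ξ - ζ) / ε)
      (((1 - ε • X)⁻¹ * X) *ᵥ ξ ⬝ᵥ ξ) := by
  set A := 1 - ε • X
  have hA : A.IsSymm := (conjTranspose_eq_transpose_of_trivial A).symm.trans hpos.isHermitian
  have hval : ∀ ζ, X *ᵥ ζ ⬝ᵥ ζ - (ξ - ζ) ⬝ᵥ (ξ - ζ) / ε =
      (A⁻¹ * X) *ᵥ ξ ⬝ᵥ ξ - A *ᵥ (ζ - A⁻¹ *ᵥ ξ) ⬝ᵥ (ζ - A⁻¹ *ᵥ ξ) / ε := by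
    intro ζ
    have hdet : IsUnit A.det := (isUnit_iff_isUnit_det A).1 hpos.isUnit
    field_simp
    linear_combination mul_mulVec_dotProduct_sub_dotProduct_sub hA hdet ξ ζ
  refine ⟨⟨A⁻¹ *ᵥ ξ, ?_⟩, ?_⟩
  · simp only [hval, sub_self, mulVec_zero, zero_dotProduct, zero_div, sub_zero]
  rintro _ ⟨ζ, rfl⟩
  have hQ : 0 ≤ A *ᵥ (ζ - A⁻¹ *ᵥ ξ) ⬝ᵥ (ζ - A⁻¹ *ᵥ ξ) := by
    simpa [dotProduct_comm] using hpos.posSemidef.dotProduct_mulVec_nonneg (ζ - A⁻¹ *ᵥ ξ)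
  simp only [hval]
  linarith [div_nonneg hQ hε.le]

end Matrix

theorem stmt5_general (N : ℕ) (X : Matrix (Fin N) (Fin N) ℝ)
    (ε : ℝ) (hε : 0 < ε)
    (hpos : ((1 : Matrix (Fin N) (Fin N) ℝ) - ε • X).PosDef)
    (ξ : Fin N → ℝ) :
    IsLUB (Set.range fun ζ : Fin N → ℝ =>
        X.mulVec ζ ⬝ᵥ ζ - ((ξ - ζ) ⬝ᵥ (ξ - ζ)) / ε)
      ((((1 : Matrix (Fin N) (Fin N) ℝ) - ε • X)⁻¹ * X).mulVec ξ ⬝ᵥ ξ) :=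
  (isGreatest_range_mulVec_dotProduct_sub_div hε hpos ξ).isLUB

/-- Sup-convolution of a quadratic form: if X is symmetric and ε ∈ (0,1) is such
that εX < I (all eigenvalues of X strictly less than 1/ε), then for every ξ,
sup_ζ { Xζ·ζ - |ξ-ζ|²/ε } = X^ε ξ·ξ with X^ε = (I - εX)⁻¹ X. -/
theorem stmt5 (N : ℕ) (hN : 1 ≤ N) (X : Matrix (Fin N) (Fin N) ℝ) (hX : X.IsSymm)
    (ε : ℝ) (hε : 0 < ε) (hε1 : ε < 1)
    (hpos : ((1 : Matrix (Fin N) (Fin N) ℝ) - ε • X).PosDef)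
    (ξ : Fin N → ℝ) :
    IsLUB (Set.range fun ζ : Fin N → ℝ =>
        X.mulVec ζ ⬝ᵥ ζ - ((ξ - ζ) ⬝ᵥ (ξ - ζ)) / ε)
      ((((1 : Matrix (Fin N) (Fin N) ℝ) - ε • X)⁻¹ * X).mulVec ξ ⬝ᵥ ξ) :=
  stmt5_general N X ε hε hpos ξ
end

section
/- Matrix inequality consequence: let X, Y be symmetric N×N matrices, L₂ ≥ 0, and Z a symmetric matrix such that Xz₁·z₁ - Yz₂·z₂ ≤ Z(z₁-z₂)·(z₁-z₂) + 2L₂|z₁|² for all z₁, z₂ ∈ ℝ^N, where Z = (2/ε̄)(I - (1+ϖ)â⊗â) with |â| = 1, ε̄ > 0, ϖ > 0. Then Tr(X - Y) ≤ -8ϖ/ε̄ + 2NL₂. -/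
/-!
Put `M = X - Y - 2L₂ • 1`. Taking `z₁ = z₂` in the hypothesis shows that the quadratic form of
`M` is nonpositive, and `z₁ = -z₂ = â` gives `M â · â ≤ -8ϖ/ε̄`, since `Z â = -(2ϖ/ε̄) â`.
A matrix with nonpositive quadratic form has trace at most its quadratic form at any unit vector.
-/

open Matrix

namespace Matrix

variable {n R : Type*} [Fintype n] [CommRing R]

theorem mulVec_dotProduct_of_isSymm {Q : Matrix n n R} (hQ : Q.IsSymm) (v w : n → R) :
    Q *ᵥ v ⬝ᵥ w = v ⬝ᵥ Q *ᵥ w := by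
  rw [dotProduct_comm, dotProduct_mulVec, ← mulVec_transpose, hQ.eq, dotProduct_comm]

variable [DecidableEq n]

theorem one_sub_smul_vecMulVec_self_mulVec {u : n → R} (hu : u ⬝ᵥ u = 1) (d : R) :
    (1 - d • vecMulVec u u) *ᵥ u = (1 - d) • u := by
  rw [sub_mulVec, one_mulVec, smul_mulVec, vecMulVec_mulVec, hu]
  simp [sub_smul]

variable [PartialOrder R] [IsOrderedRing R]

theorem trace_nonpos_of_forall_mulVec_dotProduct_nonpos {M : Matrix n n R}
    (hM : ∀ z, M *ᵥ z ⬝ᵥ z ≤ 0) : M.trace ≤ 0 :=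
  Finset.sum_nonpos fun i _ => by simpa using hM (Pi.single i 1)

/-- With `P = u uᵀ` and `Q = 1 - P`, `tr M = tr (M P) + tr (Q M Q)` and `Q M Q` again has
nonpositive quadratic form. -/
theorem trace_le_of_forall_mulVec_dotProduct_nonpos {M : Matrix n n R}
    (hM : ∀ z, M *ᵥ z ⬝ᵥ z ≤ 0) {u : n → R} (hu : u ⬝ᵥ u = 1) :
    M.trace ≤ M *ᵥ u ⬝ᵥ u := by
  obtain ⟨Q, hQ⟩ : ∃ Q : Matrix n n R, Q = 1 - vecMulVec u u := ⟨_, rfl⟩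
  have hQsymm : Q.IsSymm := by
    rw [hQ, IsSymm, transpose_sub, transpose_one, transpose_vecMulVec]
  have hQQ : Q * Q = Q := by
    rw [hQ, sub_mul, one_mul, mul_sub, mul_one, mul_vecMulVec, vecMulVec_mulVec, hu]
    simp
  have hsplit : M.trace = M *ᵥ u ⬝ᵥ u + (M * Q).trace := by
    rw [hQ, Matrix.mul_sub, mul_one, trace_sub, mul_vecMulVec, trace_vecMulVec]
    ring
  have hcompress : (M * Q).trace = (Q * M * Q).trace := by
    calc (M * Q).trace = (M * (Q * Q)).trace := by rw [hQQ]
      _ = (Q * M * Q).trace := by rw [trace_mul_cycle', Matrix.mul_assoc]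
  have hnonpos : (Q * M * Q).trace ≤ 0 := by
    refine trace_nonpos_of_forall_mulVec_dotProduct_nonpos fun z => ?_
    rw [← mulVec_mulVec, ← mulVec_mulVec, mulVec_dotProduct_of_isSymm hQsymm]
    exact hM (Q *ᵥ z)
  rw [hsplit, hcompress]
  exact add_le_of_nonpos_right hnonpos

end Matrix

theorem stmt11_general (N : ℕ) (X Y : Matrix (Fin N) (Fin N) ℝ)
    (L₂ ε' ϖ : ℝ) (A : Fin N → ℝ) (hA : A ⬝ᵥ A = 1)
    (Z : Matrix (Fin N) (Fin N) ℝ)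
    (hZ : Z = (2 / ε') • ((1 : Matrix (Fin N) (Fin N) ℝ) - (1 + ϖ) • vecMulVec A A))
    (hineq : ∀ z₁ z₂ : Fin N → ℝ,
      X.mulVec z₁ ⬝ᵥ z₁ - Y.mulVec z₂ ⬝ᵥ z₂ ≤
        Z.mulVec (z₁ - z₂) ⬝ᵥ (z₁ - z₂) + 2 * L₂ * (z₁ ⬝ᵥ z₁)) :
    (X - Y).trace ≤ -8 * ϖ / ε' + 2 * N * L₂ := by
  set M := X - Y - (2 * L₂) • (1 : Matrix (Fin N) (Fin N) ℝ)
  have hform : ∀ z, M *ᵥ z ⬝ᵥ z = X *ᵥ z ⬝ᵥ z - Y *ᵥ z ⬝ᵥ z - 2 * L₂ * (z ⬝ᵥ z) := fun z => by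
    simp only [M, sub_mulVec, smul_mulVec, one_mulVec, sub_dotProduct, smul_dotProduct,
      smul_eq_mul]
  have hM : ∀ z, M *ᵥ z ⬝ᵥ z ≤ 0 := fun z => by
    have := hineq z z
    rw [sub_self, mulVec_zero, zero_dotProduct] at this
    linarith [hform z]
  have hZA : Z *ᵥ (A - -A) ⬝ᵥ (A - -A) = -8 * ϖ / ε' := by
    rw [sub_neg_eq_add, ← two_smul ℝ A, hZ, mulVec_smul, smul_mulVec,
      one_sub_smul_vecMulVec_self_mulVec hA]
    simp only [smul_dotProduct, dotProduct_smul, hA, smul_eq_mul]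
    ring
  have hMA : M *ᵥ A ⬝ᵥ A ≤ -8 * ϖ / ε' := by
    have := hineq A (-A)
    rw [mulVec_neg, neg_dotProduct, dotProduct_neg, neg_neg, hZA, hA] at this
    rw [hform, hA]
    linarith
  have htrace : (X - Y).trace = M.trace + 2 * N * L₂ := by
    simp only [M, trace_sub, trace_smul, trace_one, Fintype.card_fin, smul_eq_mul]
    ring
  linarith [trace_le_of_forall_mulVec_dotProduct_nonpos hM hA]

/-- Matrix inequality consequence: if Xz₁·z₁ - Yz₂·z₂ ≤ Z(z₁-z₂)·(z₁-z₂) + 2L₂|z₁|²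
for all z₁, z₂, where Z = (2/ε̄)(I - (1+ϖ)â⊗â) with |â|=1, then
Tr(X-Y) ≤ -8ϖ/ε̄ + 2NL₂. -/
theorem stmt11 (N : ℕ) (hN : 1 ≤ N) (X Y : Matrix (Fin N) (Fin N) ℝ)
    (hXs : X.IsSymm) (hYs : Y.IsSymm) (L₂ ε' ϖ : ℝ) (hL₂ : 0 ≤ L₂) (hε : 0 < ε')
    (hϖ : 0 < ϖ) (A : Fin N → ℝ) (hA : A ⬝ᵥ A = 1)
    (Z : Matrix (Fin N) (Fin N) ℝ)
    (hZ : Z = (2 / ε') • ((1 : Matrix (Fin N) (Fin N) ℝ) - (1 + ϖ) • vecMulVec A A))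
    (hineq : ∀ z₁ z₂ : Fin N → ℝ,
      X.mulVec z₁ ⬝ᵥ z₁ - Y.mulVec z₂ ⬝ᵥ z₂ ≤
        Z.mulVec (z₁ - z₂) ⬝ᵥ (z₁ - z₂) + 2 * L₂ * (z₁ ⬝ᵥ z₁)) :
    (X - Y).trace ≤ -8 * ϖ / ε' + 2 * N * L₂ :=
  stmt11_general N X Y L₂ ε' ϖ A hA Z hZ hineq
end

section
/- Cone stability under Hölder perturbation of jumps: suppose j : ℝ^N × ℝ^N → ℝ^N satisfies c₀|z| ≤ |j(x,z)| ≤ C₀|z| and |j(x,z) - j(y,z)| ≤ |z| ω for all x, y, z, where ω ≥ 0 is a constant with ω ≤ min(η c₀/(4-η), c₀) and 0 < η < 1. Let x̄, ȳ ∈ ℝ^N, m = (x̄+ȳ)/2, â a unit vector, δ > 0 small enough that δ/2 + δω/(2c₀) ≤ δ. If z satisfies |j(m,z)| ≤ δ/2 and |j(m,z)·â| ≥ (1-η/2)|j(m,z)|, then |j(x̄,z)| ≤ δ and |j(x̄,z)·â| ≥ (1-η)|j(x̄,z)|. -/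
open RealInnerProductSpace

/-- Cone stability under Hölder perturbation of jumps: if
c₀|z| ≤ |j(x,z)| ≤ C₀|z|, |j(x,z)-j(y,z)| ≤ ω|z| with
ω ≤ min(ηc₀/(4-η), c₀), and z satisfies |j(m,z)| ≤ δ/2 and
|j(m,z)·â| ≥ (1-η/2)|j(m,z)| with m = (x̄+ȳ)/2, then
|j(x̄,z)| ≤ δ and |j(x̄,z)·â| ≥ (1-η)|j(x̄,z)|. -/
theorem stmt17 (N : ℕ) (hN : 1 ≤ N)
    (j : EuclideanSpace ℝ (Fin N) → EuclideanSpace ℝ (Fin N) → EuclideanSpace ℝ (Fin N))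
    (c₀ C₀ : ℝ) (hc₀ : 0 < c₀) (hC₀ : 0 < C₀)
    (hj : ∀ x z, c₀ * ‖z‖ ≤ ‖j x z‖ ∧ ‖j x z‖ ≤ C₀ * ‖z‖)
    (ω : ℝ) (hω0 : 0 ≤ ω)
    (hjholder : ∀ x y z, ‖j x z - j y z‖ ≤ ‖z‖ * ω)
    (η : ℝ) (hη : 0 < η) (hη1 : η < 1)
    (hω : ω ≤ min (η * c₀ / (4 - η)) c₀)
    (xb yb : EuclideanSpace ℝ (Fin N)) (m : EuclideanSpace ℝ (Fin N))
    (hm : m = (2:ℝ)⁻¹ • (xb + yb))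
    (A : EuclideanSpace ℝ (Fin N)) (hA : ‖A‖ = 1)
    (δ : ℝ) (hδ : 0 < δ) (hδsmall : δ / 2 + δ * ω / (2 * c₀) ≤ δ)
    (z : EuclideanSpace ℝ (Fin N))
    (hz1 : ‖j m z‖ ≤ δ / 2)
    (hz2 : (1 - η / 2) * ‖j m z‖ ≤ |⟪j m z, A⟫|) :
    ‖j xb z‖ ≤ δ ∧ (1 - η) * ‖j xb z‖ ≤ |⟪j xb z, A⟫| := by
  obtain ⟨hv1, hv2⟩ := hj m z
  have hd : ‖j xb z - j m z‖ ≤ ‖z‖ * ω := hjholder xb m z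
  have hz0 : (0:ℝ) ≤ ‖z‖ := norm_nonneg z
  have hn : ‖j xb z‖ ≤ ‖j m z‖ + ‖z‖ * ω := by
    have := norm_sub_norm_le (j xb z) (j m z)
    linarith
  have hω1 : ω ≤ η * c₀ / (4 - η) := le_trans hω (min_le_left _ _)
  have hω2 : ω * (4 - η) ≤ η * c₀ := by
    rw [le_div_iff₀ (by linarith)] at hω1
    linarith
  have hωz : ω * (4 - η) * ‖z‖ ≤ η * ‖j m z‖ := by
    have h1 : ω * (4 - η) * ‖z‖ ≤ η * c₀ * ‖z‖ :=
      mul_le_mul_of_nonneg_right hω2 hz0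
    have h2 : η * (c₀ * ‖z‖) ≤ η * ‖j m z‖ :=
      mul_le_mul_of_nonneg_left hv1 (le_of_lt hη)
    nlinarith
  have hzc : ‖z‖ * ω * c₀ ≤ ‖j m z‖ * ω := by
    have := mul_le_mul_of_nonneg_right hv1 hω0
    nlinarith
  constructor
  · -- ‖j xb z‖ ≤ δ
    have hωv : ‖j m z‖ * ω ≤ (δ / 2) * ω := mul_le_mul_of_nonneg_right hz1 hω0
    have : ‖z‖ * ω ≤ δ * ω / (2 * c₀) := by
      rw [le_div_iff₀ (by positivity)]
      nlinarith
    linarith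
  · -- cone condition
    have hiA : |⟪j xb z, A⟫ - ⟪j m z, A⟫| ≤ ‖z‖ * ω := by
      have h1 : |⟪j xb z - j m z, A⟫| ≤ ‖j xb z - j m z‖ * ‖A‖ :=
        abs_real_inner_le_norm _ _
      rw [inner_sub_left] at h1
      rw [hA, mul_one] at h1
      linarith
    have hi2 : |⟪j m z, A⟫| - |⟪j xb z, A⟫| ≤ ‖z‖ * ω := by
      have := abs_sub_abs_le_abs_sub (⟪j m z, A⟫) (⟪j xb z, A⟫)
      have h2 : |⟪j m z, A⟫ - ⟪j xb z, A⟫| = |⟪j xb z, A⟫ - ⟪j m z, A⟫| :=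
        abs_sub_comm _ _
      linarith
    have hmul : (1 - η) * ‖j xb z‖ ≤ (1 - η) * (‖j m z‖ + ‖z‖ * ω) :=
      mul_le_mul_of_nonneg_left hn (by linarith)
    -- (1-η)(‖v‖+ω‖z‖) ≤ (1-η/2)‖v‖ - ω‖z‖ ⟺ (2-η)ω‖z‖ ≤ (η/2)‖v‖
    nlinarith [mul_nonneg hω0 hz0]
end
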